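/- For integers n ≥ 1 and k > 3, the map ρ defined on nodes by ρ(a_i) = a'_{i mod nk} and ρ(b_i) = b'_{i mod k} (where a'_j, b'_j denote the vertices of Star_{n,k} and a_i, b_i those of Star_{n,2k}), extended to cells by taking images of node sets, is a CC covering of the triangular lift 3-CL(Star_{n,k}) by the triangular lift 3-CL(Star_{n,2k}). -/

import Mathlib

/-! Basic framework: combinatorial complexes, natural neighborhood functions,
CC coverings, Hasse graphs, and higher-order message-passing (HOMP) models. -/

namespace TDL

/-- The raw data of a combinatorial complex over an ambient node type `S`:
a set of cells (finite, nonempty subsets of nodes) and a rank function. -/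
structure PreCC (S : Type*) where
  cells : Set (Finset S)
  rk : Finset S → ℕ

/-- A (featureless) combinatorial complex.  The node set is implicitly the set of
elements appearing in cells; every singleton of such a node is a cell of rank `0`,
cells are nonempty, there are finitely many cells, and the rank function is
monotone with respect to inclusion. -/
structure CC (S : Type*) extends PreCC S where
  cells_finite : cells.Finite
  nonempty_of_mem : ∀ x ∈ cells, x.Nonempty
  singleton_mem : ∀ x ∈ cells, ∀ s ∈ x, ({s} : Finset S) ∈ cells
  rk_singleton : ∀ s : S, ({s} : Finset S) ∈ cells → rk {s} = 0
  rk_mono : ∀ x ∈ cells, ∀ y ∈ cells, x ⊆ y → rk x ≤ rk y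

/-- Names of the natural neighborhood functions: `(r₁,r₂)`-adjacency,
coadjacency, incidence and co-incidence. -/
inductive NbhdKind : Type
  | adj (r₁ r₂ : ℕ)
  | coadj (r₁ r₂ : ℕ)
  | inc (r₁ r₂ : ℕ)
  | coinc (r₁ r₂ : ℕ)
  deriving DecidableEq

/-- The two ranks mentioned by a neighborhood kind are bounded by `ℓ`. -/
def NbhdKind.bounded (ℓ : ℕ) : NbhdKind → Prop
  | .adj r₁ r₂ => r₁ ≤ ℓ ∧ r₂ ≤ ℓ
  | .coadj r₁ r₂ => r₁ ≤ ℓ ∧ r₂ ≤ ℓ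
  | .inc r₁ r₂ => r₁ ≤ ℓ ∧ r₂ ≤ ℓ
  | .coinc r₁ r₂ => r₁ ≤ ℓ ∧ r₂ ≤ ℓ

namespace PreCC

variable {S : Type*}

/-- The `r`-skeleton: the set of cells of rank `r`. -/
def skel (X : PreCC S) (r : ℕ) : Set (Finset S) := {x | x ∈ X.cells ∧ X.rk x = r}

/-- The natural neighborhood functions of a complex. -/
def nbhd (X : PreCC S) : NbhdKind → Finset S → Set (Finset S)
  | .adj r₁ r₂, x => {y | x ∈ X.skel r₁ ∧ y ∈ X.skel r₁ ∧ ∃ z ∈ X.skel r₂, x ⊆ z ∧ y ⊆ z}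
  | .coadj r₁ r₂, x => {y | x ∈ X.skel r₁ ∧ y ∈ X.skel r₁ ∧ ∃ z ∈ X.skel r₂, z ⊆ x ∧ z ⊆ y}
  | .inc r₁ r₂, x => {y | x ∈ X.skel r₁ ∧ y ∈ X.skel r₂ ∧ x ⊆ y}
  | .coinc r₁ r₂, x => {y | x ∈ X.skel r₁ ∧ y ∈ X.skel r₂ ∧ y ⊆ x}

/-- The Hasse graph of a complex: vertices are cells, and `x, y` are joined by an
edge whenever `x ⊆ y` and `rk x = rk y - 1` (or symmetrically). -/
def hasse (X : PreCC S) : SimpleGraph {x : Finset S // x ∈ X.cells} where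
  Adj a b := (a.1 ⊆ b.1 ∧ X.rk a.1 + 1 = X.rk b.1) ∨ (b.1 ⊆ a.1 ∧ X.rk b.1 + 1 = X.rk a.1)
  symm := by
    constructor
    rintro a b (h | h)
    · exact Or.inr h
    · exact Or.inl h
  loopless := by
    constructor
    rintro a (⟨-, h⟩ | ⟨-, h⟩) <;> omega

end PreCC

/-- `ρ` is a CC covering of `X` by `Xt`: it maps cells of `Xt` to cells of `X`
surjectively, preserves ranks, and is a local isomorphism with respect to every
natural neighborhood function. -/
structure IsCovering {S' S : Type*} (Xt : PreCC S') (X : PreCC S)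
    (ρ : Finset S' → Finset S) : Prop where
  mem : ∀ x' ∈ Xt.cells, ρ x' ∈ X.cells
  surj : ∀ x ∈ X.cells, ∃ x' ∈ Xt.cells, ρ x' = x
  rank : ∀ x' ∈ Xt.cells, X.rk (ρ x') = Xt.rk x'
  locBij : ∀ x' ∈ Xt.cells, ∀ N : NbhdKind, Set.BijOn ρ (Xt.nbhd N x') (X.nbhd N (ρ x'))

open Classical in
/-- The multiset underlying a finite set (junk value `0` for infinite sets). -/
noncomputable def setMultiset {α : Type*} (s : Set α) : Multiset α :=
  if h : s.Finite then h.toFinset.val else 0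

/-- A higher-order message-passing (HOMP) model over a feature space `D`, for
featureless complexes of dimension at most `ℓ`: a number of layers `T`, an initial
constant feature, and, per layer, message functions (per neighborhood function and
rank), permutation-invariant aggregations (functions of multisets), a combination
operator over the family of neighborhood functions with ranks at most `ℓ`,
activations, and a readout defined on multisets. -/
structure HOMP (D : Type*) (ℓ : ℕ) where
  T : ℕ
  init : D
  msg : ℕ → NbhdKind → ℕ → D → D → D
  agg : ℕ → NbhdKind → Multiset D → D
  comb : ℕ → ({N : NbhdKind // N.bounded ℓ} → D) → D
  act : ℕ → D → D
  readout : Multiset D → D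

namespace HOMP

variable {D : Type*} {ℓ : ℕ} {S : Type*}

/-- The cell feature maps computed by a HOMP model on a complex:
`h⁰_x` is the initial constant, and
`h^{t+1}_x = β_t (⊗_N (⊕ {{ m_{t,N,rk x}(h^t_x, h^t_y) : y ∈ N(x) }}))`. -/
noncomputable def feat (M : HOMP D ℓ) (X : PreCC S) : ℕ → Finset S → D
  | 0, _ => M.init
  | t + 1, x =>
      M.act t <| M.comb t fun N =>
        M.agg t N.1 <|
          (setMultiset (X.nbhd N.1 x)).map fun y =>
            M.msg t N.1 (X.rk x) (M.feat X t x) (M.feat X t y)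

/-- The output of a HOMP model: the readout of the multiset of final features. -/
noncomputable def out (M : HOMP D ℓ) (X : PreCC S) : D :=
  M.readout <| (setMultiset X.cells).map fun x => M.feat X M.T x

end HOMP

end TDL

namespace TDL

/-- The adjacency relation of the star graph `Star_{n,k}`: vertices are
`a_i` (`i ∈ ℤ/nk`, left summand) and `b_i` (`i ∈ ℤ/k`, right summand);
`a_i ∼ a_j` iff `i − j ≡ ±1 (mod nk)`, and `b_i ∼ a_{n·i}, a_{n·i+1}`. -/
def starAdj (n k : ℕ) : ZMod (n * k) ⊕ ZMod k → ZMod (n * k) ⊕ ZMod k → Prop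
  | .inl i, .inl j => i ≠ j ∧ (i - j = 1 ∨ j - i = 1)
  | .inl j, .inr i => j = ((n * i.val : ℕ) : ZMod (n * k)) ∨
      j = ((n * i.val + 1 : ℕ) : ZMod (n * k))
  | .inr i, .inl j => j = ((n * i.val : ℕ) : ZMod (n * k)) ∨
      j = ((n * i.val + 1 : ℕ) : ZMod (n * k))
  | .inr _, .inr _ => False

/-- The star graph `Star_{n,k}`. -/
def starGraph (n k : ℕ) : SimpleGraph (ZMod (n * k) ⊕ ZMod k) where
  Adj := starAdj n k
  symm := by
    constructor
    rintro (i | i) (j | j) h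
    · exact ⟨h.1.symm, h.2.symm⟩
    · exact h
    · exact h
    · exact h.elim
  loopless := by
    constructor
    rintro (i | i) h
    · exact h.1 rfl
    · exact h

end TDL

namespace TDL

/-- The triangular lift `3-CL(G)` of a graph: `0`-cells are the singletons,
`1`-cells are the edges, `2`-cells are the triangles; ranks `0`, `1`, `2`. -/
def triLift {V : Type*} [DecidableEq V] (G : SimpleGraph V) : PreCC V where
  cells := {x | (∃ v, x = {v}) ∨ (∃ u v, G.Adj u v ∧ x = {u, v}) ∨ G.IsNClique 3 x}
  rk x := x.card - 1

end TDL

namespace TDL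

/-- The node map sending `a_i ↦ a'_{i mod nk}` and `b_i ↦ b'_{i mod k}` from the
vertices of `Star_{n,2k}` to those of `Star_{n,k}`. -/
def starProj (n k : ℕ) : ZMod (n * (2 * k)) ⊕ ZMod (2 * k) → ZMod (n * k) ⊕ ZMod k
  | .inl i => .inl ((i.val : ℕ) : ZMod (n * k))
  | .inr i => .inr ((i.val : ℕ) : ZMod k)

/-!
The vertex map `Star_{n,2k} → Star_{n,k}` is a graph homomorphism that lifts every edge at every
vertex, and it identifies no two vertices at distance at most `3`: placing the vertices of
`Star_{n,2k}` on a circle, fibre-mates are antipodal, while an edge moves a vertex by a bounded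
angle. For such a map the cells of the triangular lifts (nonempty cliques of size at most `3`)
lift around any vertex, uniquely near a given cell, which is exactly the covering property.
-/

namespace PreCC

variable {S : Type*}

def Linked (X : PreCC S) (x y : Finset S) : Prop :=
  (∃ z ∈ X.cells, x ⊆ z ∧ y ⊆ z) ∨ (∃ z ∈ X.cells, z ⊆ x ∧ z ⊆ y)

theorem mem_cells_of_mem_nbhd {X : PreCC S} {N : NbhdKind} {x y : Finset S}
    (h : y ∈ X.nbhd N x) : y ∈ X.cells := by
  cases N <;> exact h.2.1.1

theorem linked_of_mem_nbhd {X : PreCC S} {N : NbhdKind} {x y : Finset S}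
    (h : y ∈ X.nbhd N x) : X.Linked x y := by
  cases N with
  | adj => obtain ⟨-, -, z, hz, hxz, hyz⟩ := h; exact .inl ⟨z, hz.1, hxz, hyz⟩
  | coadj => obtain ⟨-, -, z, hz, hzx, hzy⟩ := h; exact .inr ⟨z, hz.1, hzx, hzy⟩
  | inc => obtain ⟨-, hy, hxy⟩ := h; exact .inl ⟨y, hy.1, hxy, subset_rfl⟩
  | coinc => obtain ⟨-, hy, hyx⟩ := h; exact .inr ⟨y, hy.1, hyx, subset_rfl⟩

end PreCC

section Covering

variable {S' S : Type*} {Xt : PreCC S'} {X : PreCC S} {ρ : Finset S' → Finset S}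

theorem mapsTo_nbhd (skel : ∀ x' ∈ Xt.cells, ∀ r, ρ x' ∈ X.skel r ↔ x' ∈ Xt.skel r)
    (mono : Monotone ρ) {x' : Finset S'} (hx' : x' ∈ Xt.cells) (N : NbhdKind) :
    Set.MapsTo ρ (Xt.nbhd N x') (X.nbhd N (ρ x')) := by
  cases N with
  | adj r₁ r₂ =>
    rintro y ⟨hx, hy, z, hz, hxz, hyz⟩
    exact ⟨(skel x' hx' r₁).2 hx, (skel y hy.1 r₁).2 hy, ρ z, (skel z hz.1 r₂).2 hz,
      mono hxz, mono hyz⟩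
  | coadj r₁ r₂ =>
    rintro y ⟨hx, hy, z, hz, hzx, hzy⟩
    exact ⟨(skel x' hx' r₁).2 hx, (skel y hy.1 r₁).2 hy, ρ z, (skel z hz.1 r₂).2 hz,
      mono hzx, mono hzy⟩
  | inc r₁ r₂ =>
    rintro y ⟨hx, hy, hxy⟩
    exact ⟨(skel x' hx' r₁).2 hx, (skel y hy.1 r₂).2 hy, mono hxy⟩
  | coinc r₁ r₂ =>
    rintro y ⟨hx, hy, hyx⟩
    exact ⟨(skel x' hx' r₁).2 hx, (skel y hy.1 r₂).2 hy, mono hyx⟩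

theorem surjOn_nbhd (skel : ∀ x' ∈ Xt.cells, ∀ r, ρ x' ∈ X.skel r ↔ x' ∈ Xt.skel r)
    (lift_sup : ∀ x' ∈ Xt.cells, ∀ z ∈ X.cells, ρ x' ⊆ z → ∃ z' ∈ Xt.cells, x' ⊆ z' ∧ ρ z' = z)
    (lift_sub : ∀ x' ∈ Xt.cells, ∀ z ∈ X.cells, z ⊆ ρ x' → ∃ z' ∈ Xt.cells, z' ⊆ x' ∧ ρ z' = z)
    {x' : Finset S'} (hx' : x' ∈ Xt.cells) (N : NbhdKind) :
    Set.SurjOn ρ (Xt.nbhd N x') (X.nbhd N (ρ x')) := by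
  cases N with
  | adj r₁ r₂ =>
    rintro y ⟨hx, hy, z, hz, hxz, hyz⟩
    obtain ⟨z', hz', hxz', rfl⟩ := lift_sup x' hx' z hz.1 hxz
    obtain ⟨y', hy', hyz', rfl⟩ := lift_sub z' hz' y hy.1 hyz
    exact ⟨y', ⟨(skel x' hx' r₁).1 hx, (skel y' hy' r₁).1 hy, z', (skel z' hz' r₂).1 hz,
      hxz', hyz'⟩, rfl⟩
  | coadj r₁ r₂ =>
    rintro y ⟨hx, hy, z, hz, hzx, hzy⟩
    obtain ⟨z', hz', hzx', rfl⟩ := lift_sub x' hx' z hz.1 hzx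
    obtain ⟨y', hy', hzy', rfl⟩ := lift_sup z' hz' y hy.1 hzy
    exact ⟨y', ⟨(skel x' hx' r₁).1 hx, (skel y' hy' r₁).1 hy, z', (skel z' hz' r₂).1 hz,
      hzx', hzy'⟩, rfl⟩
  | inc r₁ r₂ =>
    rintro y ⟨hx, hy, hxy⟩
    obtain ⟨y', hy', hxy', rfl⟩ := lift_sup x' hx' y hy.1 hxy
    exact ⟨y', ⟨(skel x' hx' r₁).1 hx, (skel y' hy' r₂).1 hy, hxy'⟩, rfl⟩
  | coinc r₁ r₂ =>
    rintro y ⟨hx, hy, hyx⟩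
    obtain ⟨y', hy', hyx', rfl⟩ := lift_sub x' hx' y hy.1 hyx
    exact ⟨y', ⟨(skel x' hx' r₁).1 hx, (skel y' hy' r₂).1 hy, hyx'⟩, rfl⟩

theorem IsCovering.of_lift
    (mem : ∀ x' ∈ Xt.cells, ρ x' ∈ X.cells)
    (surj : ∀ x ∈ X.cells, ∃ x' ∈ Xt.cells, ρ x' = x)
    (rank : ∀ x' ∈ Xt.cells, X.rk (ρ x') = Xt.rk x')
    (mono : Monotone ρ)
    (lift_sup : ∀ x' ∈ Xt.cells, ∀ z ∈ X.cells, ρ x' ⊆ z → ∃ z' ∈ Xt.cells, x' ⊆ z' ∧ ρ z' = z)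
    (lift_sub : ∀ x' ∈ Xt.cells, ∀ z ∈ X.cells, z ⊆ ρ x' → ∃ z' ∈ Xt.cells, z' ⊆ x' ∧ ρ z' = z)
    (inj : ∀ x' ∈ Xt.cells, ∀ y₁ ∈ Xt.cells, ∀ y₂ ∈ Xt.cells,
      Xt.Linked x' y₁ → Xt.Linked x' y₂ → ρ y₁ = ρ y₂ → y₁ = y₂) :
    IsCovering Xt X ρ := by
  have skel : ∀ x' ∈ Xt.cells, ∀ r, ρ x' ∈ X.skel r ↔ x' ∈ Xt.skel r := fun x' hx' r => by
    simp only [PreCC.skel, Set.mem_ofPred_eq, mem x' hx', hx', rank x' hx', true_and]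
  refine ⟨mem, surj, rank, fun x' hx' N => ⟨mapsTo_nbhd skel mono hx' N, ?_,
    surjOn_nbhd skel lift_sup lift_sub hx' N⟩⟩
  exact fun y₁ h₁ y₂ h₂ => inj x' hx' y₁ (PreCC.mem_cells_of_mem_nbhd h₁) y₂
    (PreCC.mem_cells_of_mem_nbhd h₂) (PreCC.linked_of_mem_nbhd h₁) (PreCC.linked_of_mem_nbhd h₂)

end Covering

end TDL

namespace SimpleGraph

variable {V V' : Type*} {G : SimpleGraph V} {G' : SimpleGraph V'}

theorem edist_le_three {a b c d : V} (hab : G.edist a b ≤ 1) (hbc : G.edist b c ≤ 1)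
    (hcd : G.edist c d ≤ 1) : G.edist a d ≤ 3 :=
  calc G.edist a d ≤ G.edist a b + G.edist b c + G.edist c d :=
        G.edist_triangle.trans (by gcongr; exact G.edist_triangle)
    _ ≤ 1 + 1 + 1 := by gcongr
    _ = 3 := by norm_num

theorem Walk.exists_eq_add_of_forall_adj {R : Type*} [Ring R] {θ : V → R} {c : ℤ}
    (hθ : ∀ u v, G.Adj u v → ∃ d : ℤ, |d| ≤ c ∧ θ u = θ v + d) {u v : V} (p : G.Walk u v) :
    ∃ d : ℤ, |d| ≤ c * p.length ∧ θ u = θ v + d := by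
  induction p with
  | nil => exact ⟨0, by simp, by simp⟩
  | cons h p ih =>
    obtain ⟨d₁, hd₁, e₁⟩ := hθ _ _ h
    obtain ⟨d₂, hd₂, e₂⟩ := ih
    refine ⟨d₁ + d₂, (abs_add_le _ _).trans ?_, by rw [e₁, e₂]; push_cast; abel⟩
    rw [length_cons]
    push_cast
    linarith

theorem Hom.injOn_of_isClique (φ : G' →g G) {s : Set V'} (hs : G'.IsClique s) :
    Set.InjOn φ s :=
  fun _ hu _ hv h => by_contra fun hne => (φ.map_adj (hs hu hv hne)).ne h

theorem IsClique.image_hom {s : Set V'} (hs : G'.IsClique s) (φ : G' →g G) :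
    G.IsClique (φ '' s) := by
  rintro _ ⟨u, hu, rfl⟩ _ ⟨v, hv, rfl⟩ hne
  exact φ.map_adj (hs hu hv (ne_of_apply_ne φ hne))

def Hom.LiftsAdj (φ : G' →g G) : Prop :=
  ∀ v' u, G.Adj (φ v') u → ∃ u', G'.Adj v' u' ∧ φ u' = u

def Hom.InjOnEdistLE (φ : G' →g G) (r : ℕ∞) : Prop :=
  ∀ u v, G'.edist u v ≤ r → φ u = φ v → u = v

theorem Hom.LiftsAdj.exists_lift {φ : G' →g G} (hφ : φ.LiftsAdj) {w' : V'} {c : V}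
    (hc : G.edist (φ w') c ≤ 1) : ∃ c', G'.edist w' c' ≤ 1 ∧ φ c' = c := by
  rcases G.edist_le_one_iff_adj_or_eq.1 hc with hadj | rfl
  · obtain ⟨c', hc', rfl⟩ := hφ w' c hadj
    exact ⟨c', (G'.edist_eq_one_iff_adj.2 hc').le, rfl⟩
  · exact ⟨w', by simp, rfl⟩

/-- Lifting `φ d'` to a neighbour `d''` of `c'` gives a vertex within distance `3` of `d'` with
the same image, hence `d'' = d'`. -/
theorem Hom.adj_of_edist_le_one {φ : G' →g G} (hlift : φ.LiftsAdj) (hinj : φ.InjOnEdistLE 3)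
    {w' c' d' : V'} (hc : G'.edist w' c' ≤ 1) (hd : G'.edist w' d' ≤ 1)
    (h : G.Adj (φ c') (φ d')) : G'.Adj c' d' := by
  obtain ⟨d'', hcd'', hd''⟩ := hlift c' (φ d') h
  have : G'.edist d'' d' ≤ 3 :=
    edist_le_three (G'.edist_comm ▸ (G'.edist_eq_one_iff_adj.2 hcd'').le)
      (G'.edist_comm ▸ hc) hd
  rwa [← hinj d'' d' this hd'']

end SimpleGraph

namespace ZMod

theorem eq_or_eq_add_of_cast_eq {m N : ℕ} [NeZero m] (hN : N = 2 * m) {x y : ZMod N}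
    (h : (cast x : ZMod m) = cast y) : x = y ∨ x = y + m := by
  subst hN
  have hd : ((x - y).val : ZMod m) = 0 := by
    rw [← cast_eq_val, cast_sub (dvd_mul_left m 2), h, sub_self]
  obtain ⟨t, ht⟩ := (natCast_eq_zero_iff _ _).1 hd
  have hlt : (x - y).val < 2 * m := val_lt _
  have ht2 : t < 2 := by nlinarith [NeZero.pos m]
  interval_cases t
  · rw [mul_zero, val_eq_zero, sub_eq_zero] at ht
    exact .inl ht
  · refine .inr (eq_add_of_sub_eq' ?_)
    rw [← natCast_zmod_val (x - y), ht, mul_one]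

theorem natCast_mul_val_eq_of_eq {N M c : ℕ} [NeZero N] (hM : M = c * N) {i : ZMod N} {a : ℤ}
    (h : i = a) : (c : ZMod M) * i.val = c * a := by
  subst hM
  have hi : (i.val : ℤ) ≡ a [ZMOD N] := (intCast_eq_intCast_iff _ _ _).1 (by simpa using h)
  have hci : (c * i.val : ℤ) ≡ c * a [ZMOD (c * N : ℕ)] := by push_cast; exact hi.mul_left'
  exact_mod_cast (intCast_eq_intCast_iff _ _ _).2 hci

theorem intCast_ne_natCast_of_abs_lt {N : ℕ} {d : ℤ} (hd : |d| < N) :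
    (d : ZMod (2 * N)) ≠ N := by
  intro h
  obtain ⟨t, ht⟩ :=
    (intCast_zmod_eq_zero_iff_dvd (d - N) (2 * N)).1 (by push_cast; rw [h, sub_self])
  rw [abs_lt] at hd
  push_cast at ht
  rcases lt_trichotomy t 0 with ht0 | rfl | ht0 <;> nlinarith

end ZMod

namespace TDL

section TriLift

variable {V V' : Type*} [DecidableEq V] [DecidableEq V'] {G : SimpleGraph V}
  {G' : SimpleGraph V'}

theorem mem_triLift_cells {x : Finset V} :
    x ∈ (triLift G).cells ↔ x.Nonempty ∧ G.IsClique (x : Set V) ∧ x.card ≤ 3 := by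
  constructor
  · rintro (⟨v, rfl⟩ | ⟨u, v, huv, rfl⟩ | hx)
    · simp
    · simp only [Finset.insert_nonempty, Finset.coe_pair, SimpleGraph.isClique_pair, true_and]
      exact ⟨fun _ => huv, Finset.card_le_two.trans (by norm_num)⟩
    · exact ⟨Finset.card_pos.1 (by rw [hx.card_eq]; norm_num), hx.isClique, hx.card_eq.le⟩
  · rintro ⟨hne, hcl, hcard⟩
    have := hne.card_pos
    obtain h | h | h : x.card = 1 ∨ x.card = 2 ∨ x.card = 3 := by omega
    · obtain ⟨v, rfl⟩ := Finset.card_eq_one.1 h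
      exact .inl ⟨v, rfl⟩
    · obtain ⟨u, v, huv, rfl⟩ := Finset.card_eq_two.1 h
      exact .inr (.inl ⟨u, v, hcl (by simp) (by simp) huv, rfl⟩)
    · exact .inr (.inr ⟨hcl, h⟩)

theorem mem_triLift_cells_of_subset {x y : Finset V} (hy : y ∈ (triLift G).cells)
    (hxy : x ⊆ y) (hx : x.Nonempty) : x ∈ (triLift G).cells := by
  obtain ⟨-, hcl, hcard⟩ := mem_triLift_cells.1 hy
  exact mem_triLift_cells.2 ⟨hx, hcl.subset (Finset.coe_subset.2 hxy),
    (Finset.card_le_card hxy).trans hcard⟩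

theorem edist_le_one_of_mem_triLift_cells {x : Finset V} (hx : x ∈ (triLift G).cells)
    {u v : V} (hu : u ∈ x) (hv : v ∈ x) : G.edist u v ≤ 1 :=
  G.edist_le_one_iff_adj_or_eq.2 (or_iff_not_imp_right.2 fun huv =>
    (mem_triLift_cells.1 hx).2.1 hu hv huv)

theorem exists_edist_le_one_of_linked {x y : Finset V} (hx : x ∈ (triLift G).cells)
    (hy : y ∈ (triLift G).cells) (hxy : (triLift G).Linked x y) {p : V} (hp : p ∈ y) :
    ∃ w ∈ x, G.edist p w ≤ 1 := by
  rcases hxy with ⟨z, hz, hxz, hyz⟩ | ⟨z, hz, hzx, hzy⟩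
  · obtain ⟨w, hw⟩ := (mem_triLift_cells.1 hx).1
    exact ⟨w, hw, edist_le_one_of_mem_triLift_cells hz (hyz hp) (hxz hw)⟩
  · obtain ⟨w, hw⟩ := (mem_triLift_cells.1 hz).1
    exact ⟨w, hzx hw, edist_le_one_of_mem_triLift_cells hy hp (hzy hw)⟩

theorem card_image_of_mem_triLift_cells (φ : G' →g G) {x : Finset V'}
    (hx : x ∈ (triLift G').cells) : (x.image φ).card = x.card :=
  Finset.card_image_of_injOn (φ.injOn_of_isClique (mem_triLift_cells.1 hx).2.1)

theorem image_mem_triLift_cells (φ : G' →g G) {x : Finset V'} (hx : x ∈ (triLift G').cells) :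
    x.image φ ∈ (triLift G).cells := by
  obtain ⟨hne, hcl, hcard⟩ := mem_triLift_cells.1 hx
  refine mem_triLift_cells.2
    ⟨hne.image φ, ?_, (card_image_of_mem_triLift_cells φ hx).le.trans hcard⟩
  rw [Finset.coe_image]
  exact hcl.image_hom φ

/-- Each vertex of `z` is lifted to a fixed vertex `w'` of `x'` or to a neighbour of `w'`. -/
theorem exists_triLift_superset_lift {φ : G' →g G} (hlift : φ.LiftsAdj)
    (hinj : φ.InjOnEdistLE 3) {x' : Finset V'} (hx' : x' ∈ (triLift G').cells)
    {z : Finset V} (hz : z ∈ (triLift G).cells) (hxz : x'.image φ ⊆ z) :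
    ∃ z' ∈ (triLift G').cells, x' ⊆ z' ∧ z'.image φ = z := by
  obtain ⟨w', hw'⟩ := (mem_triLift_cells.1 hx').1
  have hw'z : φ w' ∈ z := hxz (Finset.mem_image_of_mem φ hw')
  have : ∀ c, ∃ c', c ∈ z → G'.edist w' c' ≤ 1 ∧ φ c' = c := fun c => by
    by_cases hc : c ∈ z
    · obtain ⟨c', h⟩ := hlift.exists_lift (edist_le_one_of_mem_triLift_cells hz hw'z hc)
      exact ⟨c', fun _ => h⟩
    · exact ⟨w', fun h => absurd h hc⟩
  choose L hL using this
  have hφL : (z.image L).image φ = z := by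
    rw [Finset.image_image, Finset.image_congr (f := φ ∘ L) (g := id) fun c hc => (hL c hc).2,
      Finset.image_id]
  refine ⟨z.image L, mem_triLift_cells.2 ⟨(mem_triLift_cells.1 hz).1.image L, ?_, ?_⟩, ?_, hφL⟩
  · rintro _ hLc _ hLd hne
    obtain ⟨c, hc, rfl⟩ := Finset.mem_image.1 hLc
    obtain ⟨d, hd, rfl⟩ := Finset.mem_image.1 hLd
    refine φ.adj_of_edist_le_one hlift hinj (hL c hc).1 (hL d hd).1 ?_
    rw [(hL c hc).2, (hL d hd).2]
    exact (mem_triLift_cells.1 hz).2.1 hc hd fun h => hne (h ▸ rfl)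
  · exact Finset.card_image_le.trans (mem_triLift_cells.1 hz).2.2
  · intro u' hu'
    have hu'z : φ u' ∈ z := hxz (Finset.mem_image_of_mem φ hu')
    have : L (φ u') = u' := hinj _ _ (SimpleGraph.edist_le_three
      ((G'.edist_comm).trans_le (hL _ hu'z).1) (edist_le_one_of_mem_triLift_cells hx' hw' hu')
      (by simp)) (hL _ hu'z).2
    exact this ▸ Finset.mem_image_of_mem L hu'z

theorem exists_triLift_subset_lift (φ : G' →g G) {x' : Finset V'}
    (hx' : x' ∈ (triLift G').cells) {z : Finset V} (hz : z ∈ (triLift G).cells)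
    (hzx : z ⊆ x'.image φ) : ∃ z' ∈ (triLift G').cells, z' ⊆ x' ∧ z'.image φ = z := by
  have himage : (x'.filter (φ · ∈ z)).image φ = z := by
    rw [← Finset.filter_image (p := (· ∈ z)), Finset.filter_mem_eq_inter,
      Finset.inter_eq_right.2 hzx]
  refine ⟨x'.filter (φ · ∈ z), mem_triLift_cells_of_subset hx' (Finset.filter_subset _ _) ?_,
    Finset.filter_subset _ _, himage⟩
  exact Finset.image_nonempty.1 (himage ▸ (mem_triLift_cells.1 hz).1)

theorem eq_of_image_eq_of_linked {φ : G' →g G} (hinj : φ.InjOnEdistLE 3)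
    {x' y₁ y₂ : Finset V'} (hx' : x' ∈ (triLift G').cells) (hy₁ : y₁ ∈ (triLift G').cells)
    (hy₂ : y₂ ∈ (triLift G').cells) (h₁ : (triLift G').Linked x' y₁)
    (h₂ : (triLift G').Linked x' y₂) (h : y₁.image φ = y₂.image φ) : y₁ = y₂ := by
  have near : ∀ p ∈ y₁ ∪ y₂, ∃ w ∈ x', G'.edist p w ≤ 1 := fun p hp => by
    rcases Finset.mem_union.1 hp with hp | hp
    · exact exists_edist_le_one_of_linked hx' hy₁ h₁ hp
    · exact exists_edist_le_one_of_linked hx' hy₂ h₂ hp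
  have hinjOn : Set.InjOn φ ↑(y₁ ∪ y₂) := fun p hp q hq hpq => by
    obtain ⟨v, hv, hpv⟩ := near p hp
    obtain ⟨w, hw, hqw⟩ := near q hq
    exact hinj p q (SimpleGraph.edist_le_three hpv (edist_le_one_of_mem_triLift_cells hx' hv hw)
      (G'.edist_comm ▸ hqw)) hpq
  exact (Finset.image_eq_image_iff_of_injOn hinjOn Finset.subset_union_left
    Finset.subset_union_right).1 h

theorem isCovering_triLift_image {φ : G' →g G} (hlift : φ.LiftsAdj) (hinj : φ.InjOnEdistLE 3)
    (hsurj : Function.Surjective φ) :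
    IsCovering (triLift G') (triLift G) (fun x => x.image φ) := by
  refine IsCovering.of_lift (fun x' hx' => image_mem_triLift_cells φ hx') (fun x hx => ?_)
    (fun x' hx' => congrArg (· - 1) (card_image_of_mem_triLift_cells φ hx'))
    (fun _ _ h => Finset.image_subset_image h)
    (fun x' hx' z hz => exists_triLift_superset_lift hlift hinj hx' hz)
    (fun x' hx' z hz => exists_triLift_subset_lift φ hx' hz)
    (fun x' hx' y₁ hy₁ y₂ hy₂ => eq_of_image_eq_of_linked hinj hx' hy₁ hy₂)
  obtain ⟨v, hv⟩ := (mem_triLift_cells.1 hx).1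
  obtain ⟨v', rfl⟩ := hsurj v
  obtain ⟨x', hx', -, h⟩ := exists_triLift_superset_lift hlift hinj (x' := {v'})
    (mem_triLift_cells.2 (by simp)) hx (by simpa using hv)
  exact ⟨x', hx', h⟩

end TriLift

section StarGraph

variable {n K : ℕ}

theorem starGraph_adj_inl_inl {i j : ZMod (n * K)} :
    (starGraph n K).Adj (.inl i) (.inl j) ↔ i ≠ j ∧ (i = j + 1 ∨ j = i + 1) := by
  simp only [starGraph, starAdj, sub_eq_iff_eq_add, add_comm (1 : ZMod (n * K))]

theorem starGraph_adj_inl_add_one [Nontrivial (ZMod (n * K))] (i : ZMod (n * K)) :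
    (starGraph n K).Adj (.inl i) (.inl (i + 1)) :=
  starGraph_adj_inl_inl.2 ⟨by simp, .inr rfl⟩

theorem starGraph_adj_inl_inr {j : ZMod (n * K)} {i : ZMod K} :
    (starGraph n K).Adj (.inl j) (.inr i) ↔
      ∃ c ≤ 1, j = ((n * i.val + c : ℕ) : ZMod (n * K)) := by
  refine ⟨fun h => ?_, fun ⟨c, hc, h⟩ => ?_⟩
  · rcases h with h | h
    · exact ⟨0, zero_le_one, h⟩
    · exact ⟨1, le_rfl, h⟩
  · interval_cases c
    · exact .inl h
    · exact .inr h

/-- Place `a_i` at angle `2i` and `b_i` at `2ni + 1`, between its neighbours `a_{ni}` and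
`a_{ni+1}`, on a circle of circumference `2nK`. -/
def starAngle (n K : ℕ) : ZMod (n * K) ⊕ ZMod K → ZMod (2 * (n * K))
  | .inl i => 2 * i.val
  | .inr i => 2 * n * i.val + 1

theorem starAngle_adj [NeZero (n * K)] {u v : ZMod (n * K) ⊕ ZMod K}
    (h : (starGraph n K).Adj u v) : ∃ d : ℤ, |d| ≤ 2 ∧ starAngle n K u = starAngle n K v + d := by
  have foot : ∀ j i, (starGraph n K).Adj (.inl j) (.inr i) →
      ∃ d : ℤ, |d| ≤ 1 ∧ starAngle n K (.inl j) = starAngle n K (.inr i) + d := by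
    intro j i hji
    obtain ⟨c, hc, hj⟩ := starGraph_adj_inl_inr.1 hji
    have e := ZMod.natCast_mul_val_eq_of_eq (c := 2) rfl (a := (n * i.val + c : ℕ))
      (by simpa using hj)
    refine ⟨2 * c - 1, by interval_cases c <;> norm_num, ?_⟩
    simp only [starAngle]
    push_cast at e ⊢
    rw [e]
    ring
  have step : ∀ i : ZMod (n * K), starAngle n K (.inl (i + 1)) = starAngle n K (.inl i) + 2 := by
    intro i
    have e := ZMod.natCast_mul_val_eq_of_eq (c := 2) rfl (i := i + 1) (a := i.val + 1) (by simp)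
    simp only [starAngle]
    push_cast at e ⊢
    rw [e]
    ring
  rcases u with i | i <;> rcases v with j | j
  · rcases (starGraph_adj_inl_inl.1 h).2 with rfl | rfl
    · exact ⟨2, by norm_num, by rw [step]; push_cast; ring⟩
    · exact ⟨-2, by norm_num, by rw [step]; push_cast; ring⟩
  · obtain ⟨d, hd, e⟩ := foot i j h
    exact ⟨d, by linarith, e⟩
  · obtain ⟨d, hd, e⟩ := foot j i h.symm
    exact ⟨-d, by rw [abs_neg]; linarith, by rw [e]; push_cast; ring⟩
  · exact h.elim

end StarGraph

section StarProj

variable {n k : ℕ}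

theorem starProj_eq [NeZero n] [NeZero k] : starProj n k = Sum.map
    (ZMod.castHom (mul_dvd_mul_left n (dvd_mul_left k 2)) (ZMod (n * k)))
    (ZMod.castHom (dvd_mul_left k 2) (ZMod k)) := by
  funext u
  cases u <;> simp only [starProj, Sum.map_inl, Sum.map_inr, ZMod.castHom_apply, ZMod.cast_eq_val]

theorem starProj_surjective [NeZero n] [NeZero k] : Function.Surjective (starProj n k) :=
  starProj_eq (n := n) (k := k) ▸
    (ZMod.ringHom_surjective _).sumMap (ZMod.ringHom_surjective _)

theorem starProj_inl_natCast [NeZero n] [NeZero k] (m : ZMod (2 * k)) (c : ℕ) :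
    starProj n k (.inl ((n * m.val + c : ℕ) : ZMod (n * (2 * k)))) =
      .inl ((n * (ZMod.cast m : ZMod k).val + c : ℕ) : ZMod (n * k)) := by
  rw [starProj_eq, Sum.map_inl, map_natCast, ZMod.cast_eq_val, ZMod.val_natCast, Sum.inl.injEq,
    ZMod.natCast_eq_natCast_iff]
  exact (((Nat.mod_modEq _ _).mul_left' n).add_right c).symm

theorem starProj_adj [NeZero n] [NeZero k] [Nontrivial (ZMod (n * k))]
    {u v : ZMod (n * (2 * k)) ⊕ ZMod (2 * k)} (h : (starGraph n (2 * k)).Adj u v) :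
    (starGraph n k).Adj (starProj n k u) (starProj n k v) := by
  have foot : ∀ j i, (starGraph n (2 * k)).Adj (.inl j) (.inr i) →
      (starGraph n k).Adj (starProj n k (.inl j)) (starProj n k (.inr i)) := by
    intro j i hji
    obtain ⟨c, hc, rfl⟩ := starGraph_adj_inl_inr.1 hji
    rw [starProj_inl_natCast, starProj_eq, Sum.map_inr, ZMod.castHom_apply]
    exact starGraph_adj_inl_inr.2 ⟨c, hc, rfl⟩
  rcases u with i | i <;> rcases v with j | j
  · obtain ⟨-, hij⟩ := starGraph_adj_inl_inl.1 h
    simp only [starProj_eq, Sum.map_inl]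
    rcases hij with rfl | rfl <;> rw [map_add, map_one]
    · exact (starGraph_adj_inl_add_one _).symm
    · exact starGraph_adj_inl_add_one _
  · exact foot i j h
  · exact (foot j i h.symm).symm
  · exact h.elim

def starProjHom (n k : ℕ) [NeZero n] [NeZero k] [Nontrivial (ZMod (n * k))] :
    starGraph n (2 * k) →g starGraph n k :=
  ⟨starProj n k, starProj_adj⟩

theorem coe_starProjHom [NeZero n] [NeZero k] [Nontrivial (ZMod (n * k))] :
    ⇑(starProjHom n k) = starProj n k :=
  rfl

/-- The two preimages of `b'_m` are `b_m` and `b_{m+k}`, whose feet differ by `nk`. -/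
theorem exists_adj_inr_of_adj_starProj_inl [NeZero n] [NeZero k] {i : ZMod (n * (2 * k))}
    {m : ZMod k} (h : (starGraph n k).Adj (starProj n k (.inl i)) (.inr m)) :
    ∃ m', (starGraph n (2 * k)).Adj (.inl i) (.inr m') ∧ starProj n k (.inr m') = .inr m := by
  have hdvd : n * k ∣ n * (2 * k) := mul_dvd_mul_left n (dvd_mul_left k 2)
  rw [starProj_eq, Sum.map_inl] at h
  obtain ⟨c, hc, hi⟩ := starGraph_adj_inl_inr.1 h
  have lift : ∀ a < 2 * k, (a : ZMod k) = m → i = ((n * a + c : ℕ) : ZMod (n * (2 * k))) →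
      ∃ m', (starGraph n (2 * k)).Adj (.inl i) (.inr m') ∧ starProj n k (.inr m') = .inr m := by
    intro a ha ham hia
    refine ⟨a, starGraph_adj_inl_inr.2 ⟨c, hc, by rwa [ZMod.val_natCast_of_lt ha]⟩, ?_⟩
    rw [starProj_eq, Sum.map_inr, map_natCast, ham]
  have hm := ZMod.val_lt m
  rcases ZMod.eq_or_eq_add_of_cast_eq (m := n * k) (by ring) (x := i)
    (y := ((n * m.val + c : ℕ) : ZMod (n * (2 * k))))
    (by rw [ZMod.cast_natCast hdvd, ← hi, ZMod.castHom_apply]) with hi' | hi'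
  · exact lift m.val (by omega) (ZMod.natCast_zmod_val m) hi'
  · exact lift (m.val + k) (by omega) (by simp) (by rw [hi']; push_cast; ring)

theorem starProjHom_liftsAdj [NeZero n] [NeZero k] [Nontrivial (ZMod (n * k))] :
    (starProjHom n k).LiftsAdj := by
  have : Nontrivial (ZMod (n * (2 * k))) :=
    (ZMod.castHom (mul_dvd_mul_left n (dvd_mul_left k 2)) (ZMod (n * k))).domain_nontrivial
  intro v' u h
  rw [coe_starProjHom] at h ⊢
  rcases v' with i | m <;> rcases u with j | m
  · rw [starProj_eq, Sum.map_inl] at h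
    rcases (starGraph_adj_inl_inl.1 h).2 with hj | rfl
    · refine ⟨.inl (i - 1), ?_, ?_⟩
      · have := (starGraph_adj_inl_add_one (i - 1)).symm
        rwa [sub_add_cancel] at this
      · rw [starProj_eq, Sum.map_inl, map_sub, map_one, hj, add_sub_cancel_right]
    · exact ⟨.inl (i + 1), starGraph_adj_inl_add_one i,
        by rw [starProj_eq, Sum.map_inl, map_add, map_one]⟩
  · obtain ⟨m', hadj, hm'⟩ := exists_adj_inr_of_adj_starProj_inl h
    exact ⟨.inr m', hadj, hm'⟩
  · rw [starProj_eq, Sum.map_inr, ZMod.castHom_apply] at h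
    obtain ⟨c, hc, rfl⟩ := starGraph_adj_inl_inr.1 h.symm
    exact ⟨.inl ((n * m.val + c : ℕ) : ZMod (n * (2 * k))),
      (starGraph_adj_inl_inr.2 ⟨c, hc, rfl⟩).symm, starProj_inl_natCast m c⟩
  · exact h.elim

theorem eq_or_starAngle_eq_add_of_starProj_eq [NeZero n] [NeZero k]
    {u v : ZMod (n * (2 * k)) ⊕ ZMod (2 * k)} (h : starProj n k u = starProj n k v) :
    u = v ∨ starAngle n (2 * k) u = starAngle n (2 * k) v + (n * (2 * k) : ℕ) := by
  rw [starProj_eq] at h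
  rcases u with i | i <;> rcases v with j | j
  · rcases ZMod.eq_or_eq_add_of_cast_eq (m := n * k) (by ring) (x := i) (y := j)
      (by simpa using h) with rfl | rfl
    · exact .inl rfl
    · have e := ZMod.natCast_mul_val_eq_of_eq (c := 2) rfl
        (i := j + ((n * k : ℕ) : ZMod (n * (2 * k)))) (a := j.val + (n * k : ℕ)) (by simp)
      refine .inr ?_
      simp only [starAngle]
      push_cast at e ⊢
      rw [e]
      ring
  · simp at h
  · simp at h
  · rcases ZMod.eq_or_eq_add_of_cast_eq (m := k) rfl (x := i) (y := j) (by simpa using h)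
      with rfl | rfl
    · exact .inl rfl
    · have e := ZMod.natCast_mul_val_eq_of_eq (M := 2 * (n * (2 * k))) (c := 2 * n) (by ring)
        (i := j + ((k : ℕ) : ZMod (2 * k))) (a := j.val + k) (by simp)
      refine .inr ?_
      simp only [starAngle]
      push_cast at e ⊢
      rw [e]
      ring

/-- Fibre-mates sit at antipodal angles, while a walk of length at most `3` moves the angle by
at most `6 < n * (2 * k)`. -/
theorem starProjHom_injOnEdistLE [NeZero n] [NeZero k] [Nontrivial (ZMod (n * k))]
    (hnk : 4 ≤ n * k) : (starProjHom n k).InjOnEdistLE 3 := by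
  intro u v huv h
  refine (eq_or_starAngle_eq_add_of_starProj_eq h).resolve_right fun hfib => ?_
  obtain ⟨p, hp⟩ := SimpleGraph.exists_walk_of_edist_ne_top (ne_top_of_le_ne_top (by decide) huv)
  obtain ⟨d, hd, e⟩ := p.exists_eq_add_of_forall_adj fun _ _ => starAngle_adj
  have hlen : p.length ≤ 3 := by exact_mod_cast hp ▸ huv
  refine ZMod.intCast_ne_natCast_of_abs_lt (N := n * (2 * k)) ?_
    (add_left_cancel (e.symm.trans hfib))
  push_cast
  nlinarith

end StarProj

/-- For `n ≥ 1` and `k > 3`, the map on cells induced by `a_i ↦ a'_{i mod nk}`,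
`b_i ↦ b'_{i mod k}` (extended to cells by taking images of node sets) is a CC
covering of the triangular lift `3-CL(Star_{n,k})` by `3-CL(Star_{n,2k})`. -/
theorem star_triLift_covering (n k : ℕ) (hn : 1 ≤ n) (hk : 4 ≤ k) :
    IsCovering (triLift (starGraph n (2 * k))) (triLift (starGraph n k))
      (fun x => x.image (starProj n k)) := by
  have : NeZero n := ⟨by omega⟩
  have : NeZero k := ⟨by omega⟩
  have hnk : 4 ≤ n * k := by nlinarith
  have : Nontrivial (ZMod (n * k)) := ZMod.nontrivial_iff.2 (by omega)
  exact isCovering_triLift_image starProjHom_liftsAdj (starProjHom_injOnEdistLE hnk)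
    starProj_surjective

end TDL
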